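/- arXiv:hep-th/9709169 — 2 statements merged into one kernel-verified Lean document; each statement's English description precedes it below -/
import Mathlib

section
/- Fix E > 0. The set P(E) of density operators ρ with Tr(ρ H₀) ≤ E is complete in the Hilbert–Schmidt norm: every sequence in P(E) that is Cauchy with respect to ‖·‖₂ converges in ‖·‖₂ to an element of P(E). -/
open Filter
open scoped ENNReal InnerProductSpace ComplexOrder

variable {H : Type*} [NormedAddCommGroup H] [InnerProductSpace ℂ H] [CompleteSpace H]

/-- The (squared) Hilbert–Schmidt norm of an operator, computed via the matrix
elements in the orthonormal Hilbert basis `e`, valued in `[0,∞]`. -/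
noncomputable def hsNormSq (e : HilbertBasis ℕ ℂ H) (A : H →L[ℂ] H) : ℝ≥0∞ :=
  ∑' p : ℕ × ℕ, (‖⟪e p.1, A (e p.2)⟫_ℂ‖₊ : ℝ≥0∞) ^ 2

/-- The Hilbert–Schmidt norm `‖A‖₂`, valued in `[0,∞]`. -/
noncomputable def hsNorm (e : HilbertBasis ℕ ℂ H) (A : H →L[ℂ] H) : ℝ≥0∞ :=
  hsNormSq e A ^ (1 / 2 : ℝ)

/-- A density operator: a positive (self-adjoint, `⟪x, ρ x⟫ ≥ 0`) trace-class
operator of trace one (the trace being `Σ_n ⟪e n, ρ (e n)⟫` in the basis `e`). -/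
def IsDensityOp (e : HilbertBasis ℕ ℂ H) (ρ : H →L[ℂ] H) : Prop :=
  ρ.IsPositive ∧ (Summable fun n : ℕ => RCLike.re ⟪e n, ρ (e n)⟫_ℂ) ∧
    ∑' n : ℕ, RCLike.re ⟪e n, ρ (e n)⟫_ℂ = 1

/-- `Tr(ρ H₀)` for the positive diagonal operator `H₀` with `H₀ e_n = E_n e_n`:
the sum `Σ_n E_n ⟪e n, ρ (e n)⟫`, valued in `[0,∞]`. -/
noncomputable def energyTrace (e : HilbertBasis ℕ ℂ H) (En : ℕ → ℝ) (ρ : H →L[ℂ] H) : ℝ≥0∞ :=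
  ∑' n : ℕ, ENNReal.ofReal (En n * RCLike.re ⟪e n, ρ (e n)⟫_ℂ)

/-- The set `P(E)` of density operators with `Tr(ρ H₀) ≤ E`. -/
noncomputable def PE (e : HilbertBasis ℕ ℂ H) (En : ℕ → ℝ) (E : ℝ) : Set (H →L[ℂ] H) :=
  {ρ | IsDensityOp e ρ ∧ energyTrace e En ρ ≤ ENNReal.ofReal E}

/-- A sequence of operators is Cauchy with respect to the Hilbert–Schmidt norm. -/
def HSCauchy (e : HilbertBasis ℕ ℂ H) (ρ : ℕ → H →L[ℂ] H) : Prop :=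
  ∀ ε : ℝ, 0 < ε → ∃ N : ℕ, ∀ i j : ℕ, N ≤ i → N ≤ j →
    hsNorm e (ρ i - ρ j) < ENNReal.ofReal ε

/-!
Since `‖A‖ ≤ ‖A‖₂`, a `‖·‖₂`-Cauchy sequence `ρ i` converges in operator norm to some `ρbar`,
which is positive because positivity is a closed condition; in particular all matrix entries
converge. Both `‖·‖₂²` and `Tr(ρ H₀)` are sums of nonnegative continuous functions of the matrix
entries, hence lower semicontinuous (Fatou): this gives `Tr(ρbar H₀) ≤ E` and
`‖ρ i - ρbar‖₂ ≤ liminf_j ‖ρ i - ρ j‖₂`, which is small for large `i`.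
The energy bound is what keeps the trace: by Markov's inequality each diagonal
`n ↦ ⟪e n, ρ i (e n)⟫` has mass at most `E / E_N` beyond `N`, so these probability vectors are
tight and no mass escapes to infinity in the limit, whence `Tr ρbar = 1`.
-/

open scoped NNReal Topology

theorem ENNReal.tsum_le_liminf_of_tendsto {ι α : Type*} {l : Filter α} [l.NeBot]
    {f : ι → ℝ≥0∞} {g : α → ι → ℝ≥0∞} (h : ∀ i, Tendsto (fun a => g a i) l (𝓝 (f i))) :
    ∑' i, f i ≤ liminf (fun a => ∑' i, g a i) l := by
  rw [ENNReal.tsum_eq_iSup_sum]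
  refine iSup_le fun s => ?_
  calc ∑ i ∈ s, f i = liminf (fun a => ∑ i ∈ s, g a i) l :=
        (tendsto_finsetSum s fun i _ => h i).liminf_eq.symm
    _ ≤ liminf (fun a => ∑' i, g a i) l :=
        liminf_le_liminf (Eventually.of_forall fun a => ENNReal.sum_le_tsum s)

theorem HilbertBasis.tsum_nnnorm_inner_sq {ι 𝕜 E : Type*} [RCLike 𝕜] [NormedAddCommGroup E]
    [InnerProductSpace 𝕜 E] (b : HilbertBasis ι 𝕜 E) (x : E) :
    ∑' i, (‖⟪b i, x⟫_𝕜‖₊ : ℝ≥0∞) ^ 2 = (‖x‖₊ : ℝ≥0∞) ^ 2 := by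
  have h := lp.hasSum_norm (p := 2) (by norm_num) (b.repr x)
  simp only [b.repr_apply_apply, LinearIsometryEquiv.norm_map, ENNReal.toReal_ofNat,
    Real.rpow_two] at h
  have h' : HasSum (fun i => ‖⟪b i, x⟫_𝕜‖₊ ^ 2) (‖x‖₊ ^ 2) := by
    rw [← NNReal.hasSum_coe]; simpa only [NNReal.coe_pow, coe_nnnorm] using h
  exact_mod_cast (ENNReal.hasSum_coe.2 h').tsum_eq

section Tightness

open Finset

variable {w : ℕ → ℝ} {C : ℝ≥0∞}

theorem one_sub_div_le_sum_range_of_moment_le {p : ℕ → ℝ} (hw : Monotone w) (hC : C ≠ ⊤)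
    (hp0 : ∀ n, 0 ≤ p n) (hp : HasSum p 1) (hpC : ∑' n, ENNReal.ofReal (w n * p n) ≤ C)
    {N : ℕ} (hN : 0 < w N) :
    1 - C.toReal / w N ≤ ∑ n ∈ range N, p n := by
  have htail : w N * ∑' j, p (j + N) ≤ C.toReal := by
    rw [← ENNReal.ofReal_le_iff_le_toReal hC, ← tsum_mul_left,
      ENNReal.ofReal_tsum_of_nonneg (fun j => mul_nonneg hN.le (hp0 _))
        (((summable_nat_add_iff N).2 hp.summable).mul_left _)]
    calc ∑' j, ENNReal.ofReal (w N * p (j + N))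
        ≤ ∑' j, ENNReal.ofReal (w (j + N) * p (j + N)) :=
          ENNReal.tsum_le_tsum fun j => ENNReal.ofReal_le_ofReal <|
            mul_le_mul_of_nonneg_right (hw (Nat.le_add_left N j)) (hp0 _)
      _ ≤ ∑' n, ENNReal.ofReal (w n * p n) :=
          ENNReal.tsum_comp_le_tsum_of_injective (add_left_injective N) _
      _ ≤ C := hpC
  have hsplit : ∑ n ∈ range N, p n + ∑' j, p (j + N) = 1 :=
    (hp.summable.sum_add_tsum_nat_add N).trans hp.tsum_eq
  have htail_le : ∑' j, p (j + N) ≤ C.toReal / w N := (le_div_iff₀' hN).2 htail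
  linarith

theorem hasSum_one_of_tendsto_of_moment_le {α : Type*} {l : Filter α} [l.NeBot]
    {p : α → ℕ → ℝ} {q : ℕ → ℝ}
    (hw : Monotone w) (hw_top : Tendsto w atTop atTop) (hC : C ≠ ⊤)
    (hp0 : ∀ a n, 0 ≤ p a n) (hp : ∀ a, HasSum (p a) 1)
    (hpC : ∀ a, ∑' n, ENNReal.ofReal (w n * p a n) ≤ C)
    (hpq : ∀ n, Tendsto (fun a => p a n) l (𝓝 (q n))) : HasSum q 1 := by
  have hpart (s : Finset ℕ) : Tendsto (fun a => ∑ n ∈ s, p a n) l (𝓝 (∑ n ∈ s, q n)) :=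
    tendsto_finsetSum s fun n _ => hpq n
  have hq0 : ∀ n, 0 ≤ q n := fun n => ge_of_tendsto' (hpq n) fun a => hp0 a n
  have hle (s : Finset ℕ) : ∑ n ∈ s, q n ≤ 1 :=
    le_of_tendsto' (hpart s) fun a => sum_le_hasSum s (fun n _ => hp0 a n) (hp a)
  have hq : Summable q := summable_of_sum_le hq0 hle
  refine hq.hasSum_iff.2 (le_antisymm (hq.tsum_le_of_sum_le hle) ?_)
  have hlow : ∀ᶠ N in atTop, 1 - C.toReal / w N ≤ ∑' n, q n := by
    filter_upwards [hw_top.eventually_gt_atTop 0] with N hN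
    calc 1 - C.toReal / w N ≤ ∑ n ∈ range N, q n :=
          ge_of_tendsto' (hpart _) fun a =>
            one_sub_div_le_sum_range_of_moment_le hw hC (hp0 a) (hp a) (hpC a) hN
      _ ≤ ∑' n, q n := hq.sum_le_tsum _ fun n _ => hq0 n
  have hlim : Tendsto (fun N => 1 - C.toReal / w N) atTop (𝓝 1) := by
    simpa using tendsto_const_nhds.sub (tendsto_const_nhds.div_atTop hw_top)
  exact le_of_tendsto hlim hlow

end Tightness

section

omit [CompleteSpace H]

theorem tendsto_inner_apply {α : Type*} {l : Filter α} {A : α → H →L[ℂ] H} {B : H →L[ℂ] H}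
    (h : Tendsto A l (𝓝 B)) (x y : H) :
    Tendsto (fun a => ⟪x, A a y⟫_ℂ) l (𝓝 ⟪x, B y⟫_ℂ) :=
  tendsto_const_nhds.inner (((ContinuousLinearMap.apply ℂ H y).continuous.tendsto B).comp h)

section HilbertSchmidt

variable (e : HilbertBasis ℕ ℂ H)

theorem hsNorm_sq (A : H →L[ℂ] H) : hsNorm e A ^ 2 = hsNormSq e A := by
  rw [hsNorm, ← ENNReal.rpow_natCast, ← ENNReal.rpow_mul]
  norm_num

theorem hsNorm_le_iff {A : H →L[ℂ] H} {c : ℝ≥0∞} : hsNorm e A ≤ c ↔ hsNormSq e A ≤ c ^ 2 := by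
  rw [← hsNorm_sq, ENNReal.pow_le_pow_left_iff two_ne_zero]

theorem hsNorm_le_of_tendsto {α : Type*} {l : Filter α} [l.NeBot] {A : α → H →L[ℂ] H}
    {B : H →L[ℂ] H} {c : ℝ≥0∞}
    (hAB : ∀ m k, Tendsto (fun a => ⟪e m, A a (e k)⟫_ℂ) l (𝓝 ⟪e m, B (e k)⟫_ℂ))
    (hc : ∀ᶠ a in l, hsNorm e (A a) ≤ c) : hsNorm e B ≤ c := by
  rw [hsNorm_le_iff]
  calc hsNormSq e B ≤ liminf (fun a => hsNormSq e (A a)) l :=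
        ENNReal.tsum_le_liminf_of_tendsto fun p =>
          ((by fun_prop : Continuous fun z : ℂ => (‖z‖₊ : ℝ≥0∞) ^ 2).tendsto _).comp
            (hAB p.1 p.2)
    _ ≤ liminf (fun _ => c ^ 2) l := liminf_le_liminf (hc.mono fun a => (hsNorm_le_iff e).1)
    _ = c ^ 2 := liminf_const _

theorem HSCauchy.tendsto_hsNorm_sub {e : HilbertBasis ℕ ℂ H} {ρ : ℕ → H →L[ℂ] H}
    (h : HSCauchy e ρ) {ρbar : H →L[ℂ] H} (hρ : Tendsto ρ atTop (𝓝 ρbar)) :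
    Tendsto (fun i => hsNorm e (ρ i - ρbar)) atTop (𝓝 0) := by
  refine ENNReal.tendsto_nhds_zero.2 fun ε hε => ?_
  obtain ⟨r, -, hr, hrε⟩ := ENNReal.lt_iff_exists_real_btwn.1 hε
  obtain ⟨N, hN⟩ := h r (ENNReal.ofReal_pos.1 hr)
  filter_upwards [eventually_ge_atTop N] with i hi
  refine (hsNorm_le_of_tendsto e (l := atTop) (A := fun j => ρ i - ρ j) ?_ ?_).trans hrε.le
  · exact fun m k => tendsto_inner_apply (tendsto_const_nhds.sub hρ) _ _
  · filter_upwards [eventually_ge_atTop N] with j hj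
    exact (hN i j hi hj).le

end HilbertSchmidt

section DensityOperators

variable {e : HilbertBasis ℕ ℂ H} {En : ℕ → ℝ} {α : Type*} {l : Filter α} [l.NeBot]
  {ρ : α → H →L[ℂ] H} {ρbar : H →L[ℂ] H}

theorem IsDensityOp.hasSum (h : IsDensityOp e ρbar) :
    HasSum (fun n => RCLike.re ⟪e n, ρbar (e n)⟫_ℂ) 1 :=
  h.2.2 ▸ h.2.1.hasSum

theorem energyTrace_le_of_tendsto (hρ : Tendsto ρ l (𝓝 ρbar)) {C : ℝ≥0∞}
    (hC : ∀ a, energyTrace e En (ρ a) ≤ C) : energyTrace e En ρbar ≤ C :=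
  calc energyTrace e En ρbar ≤ liminf (fun a => energyTrace e En (ρ a)) l :=
        ENNReal.tsum_le_liminf_of_tendsto fun n =>
          (ENNReal.continuous_ofReal.tendsto _).comp
            (tendsto_const_nhds.mul (RCLike.continuous_re.tendsto _ |>.comp
              (tendsto_inner_apply hρ _ _)))
    _ ≤ liminf (fun _ => C) l := liminf_le_liminf (Eventually.of_forall hC)
    _ = C := liminf_const _

end DensityOperators

end

theorem ContinuousLinearMap.isClosed_setOf_isPositive :
    IsClosed {T : H →L[ℂ] H | T.IsPositive} := by
  simpa only [ContinuousLinearMap.nonneg_iff_isPositive]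
    using CStarAlgebra.isClosed_nonneg (A := H →L[ℂ] H)

section HilbertSchmidt

variable (e : HilbertBasis ℕ ℂ H)

theorem hsNormSq_eq_tsum_adjoint (A : H →L[ℂ] H) :
    hsNormSq e A = ∑' m, (‖ContinuousLinearMap.adjoint A (e m)‖₊ : ℝ≥0∞) ^ 2 := by
  rw [hsNormSq, ENNReal.tsum_prod (f := fun m k => (‖⟪e m, A (e k)⟫_ℂ‖₊ : ℝ≥0∞) ^ 2)]
  refine tsum_congr fun m => ?_
  rw [← e.tsum_nnnorm_inner_sq]
  refine tsum_congr fun k => ?_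
  rw [ContinuousLinearMap.adjoint_inner_right, ← inner_conj_symm, RCLike.nnnorm_conj]

theorem enorm_apply_le_hsNorm_mul (A : H →L[ℂ] H) (y : H) : ‖A y‖ₑ ≤ hsNorm e A * ‖y‖ₑ := by
  rw [← ENNReal.pow_le_pow_left_iff two_ne_zero, mul_pow, hsNorm_sq, hsNormSq_eq_tsum_adjoint,
    ← ENNReal.tsum_mul_right, enorm_eq_nnnorm, enorm_eq_nnnorm, ← e.tsum_nnnorm_inner_sq (A y)]
  refine ENNReal.tsum_le_tsum fun m => ?_
  rw [← ContinuousLinearMap.adjoint_inner_left, ← mul_pow, ← ENNReal.coe_mul]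
  gcongr
  exact nnnorm_inner_le_nnnorm _ _

theorem opENorm_le_hsNorm (A : H →L[ℂ] H) : ‖A‖ₑ ≤ hsNorm e A :=
  A.opENorm_le_bound (enorm_apply_le_hsNorm_mul e A)

theorem HSCauchy.cauchySeq {ρ : ℕ → H →L[ℂ] H} (h : HSCauchy e ρ) : CauchySeq ρ := by
  refine Metric.cauchySeq_iff.2 fun ε hε => ?_
  obtain ⟨N, hN⟩ := h ε hε
  refine ⟨N, fun i hi j hj => ?_⟩
  rw [dist_eq_norm, ← ENNReal.ofReal_lt_ofReal_iff hε, ofReal_norm]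
  exact (opENorm_le_hsNorm e _).trans_lt (hN i j hi hj)

end HilbertSchmidt

theorem isDensityOp_of_tendsto {e : HilbertBasis ℕ ℂ H} {En : ℕ → ℝ} {α : Type*} {l : Filter α}
    [l.NeBot] {ρ : α → H →L[ℂ] H} {ρbar : H →L[ℂ] H}
    (hEn : Monotone En) (hEn_top : Tendsto En atTop atTop)
    (hρ : Tendsto ρ l (𝓝 ρbar)) (hρd : ∀ a, IsDensityOp e (ρ a)) {C : ℝ≥0∞} (hC : C ≠ ⊤)
    (hρC : ∀ a, energyTrace e En (ρ a) ≤ C) : IsDensityOp e ρbar := by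
  have hpos : ρbar.IsPositive :=
    ContinuousLinearMap.isClosed_setOf_isPositive.mem_of_tendsto hρ
      (Eventually.of_forall fun a => (hρd a).1)
  have htr : HasSum (fun n => RCLike.re ⟪e n, ρbar (e n)⟫_ℂ) 1 :=
    hasSum_one_of_tendsto_of_moment_le hEn hEn_top hC
      (fun a n => (hρd a).1.re_inner_nonneg_right (e n)) (fun a => (hρd a).hasSum) hρC
      fun n => RCLike.continuous_re.tendsto _ |>.comp (tendsto_inner_apply hρ _ _)
  exact ⟨hpos, htr.summable, htr.tsum_eq⟩

theorem PE_complete_general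
    (e : HilbertBasis ℕ ℂ H) (En : ℕ → ℝ)
    (hEnmono : Monotone En) (hEntop : Tendsto En atTop atTop)
    (E : ℝ)
    (ρ : ℕ → H →L[ℂ] H) (hmem : ∀ i, ρ i ∈ PE e En E) (hcauchy : HSCauchy e ρ) :
    ∃ ρbar ∈ PE e En E,
      Tendsto (fun i => hsNorm e (ρ i - ρbar)) atTop (nhds 0) := by
  obtain ⟨ρbar, hρ⟩ := cauchySeq_tendsto_of_complete hcauchy.cauchySeq
  have henergy : ∀ i, energyTrace e En (ρ i) ≤ ENNReal.ofReal E := fun i => (hmem i).2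
  refine ⟨ρbar, ⟨?_, energyTrace_le_of_tendsto hρ henergy⟩, hcauchy.tendsto_hsNorm_sub hρ⟩
  exact isDensityOp_of_tendsto hEnmono hEntop hρ (fun i => (hmem i).1) ENNReal.ofReal_ne_top
    henergy

/-- `P(E)` is complete in the Hilbert–Schmidt norm: every sequence in
`P(E)` that is `‖·‖₂`-Cauchy converges in `‖·‖₂` to an element of `P(E)`. -/
theorem PE_complete
    (e : HilbertBasis ℕ ℂ H) (En : ℕ → ℝ)
    (hEn0 : ∀ n, 0 ≤ En n) (hEnmono : Monotone En) (hEntop : Tendsto En atTop atTop)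
    (E : ℝ) (hE : 0 < E)
    (ρ : ℕ → H →L[ℂ] H) (hmem : ∀ i, ρ i ∈ PE e En E) (hcauchy : HSCauchy e ρ) :
    ∃ ρbar ∈ PE e En E,
      Tendsto (fun i => hsNorm e (ρ i - ρbar)) atTop (nhds 0) :=
  PE_complete_general e En hEnmono hEntop E ρ hmem hcauchy
end

section
/- Fix E > 0. The set P(E) of density operators ρ with Tr(ρ H₀) ≤ E is totally bounded in the Hilbert–Schmidt norm; equivalently, every sequence of elements of P(E) has a subsequence that is Cauchy with respect to ‖·‖₂. -/
open Filter
open scoped ENNReal InnerProductSpace ComplexOrder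

variable {H : Type*} [NormedAddCommGroup H] [InnerProductSpace ℂ H] [CompleteSpace H]

/-!
By Cauchy–Schwarz for the semi-inner product `(x, y) ↦ ⟪x, ρ y⟫`, the matrix entries of a density
operator satisfy `|ρₘₖ|² ≤ ρₘₘ ρₖₖ ≤ 1`, so compactness of a countable product of discs gives a
subsequence converging entrywise. The energy bound makes the diagonal tails uniformly small,
`∑_{n ≥ N} ρₙₙ ≤ E / M` once `Eₙ ≥ M` for `n ≥ N`, and the same Cauchy–Schwarz estimate with
`Tr ρ = 1` bounds the Hilbert–Schmidt mass outside the block `[0, N)²` by twice that tail.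
Entrywise convergence on the finite block and uniformly small mass outside it make the
subsequence Cauchy in `‖·‖₂`.
-/

open Topology

theorem ENNReal.tsum_prod_mul {α β : Type*} (f : α → ℝ≥0∞) (g : β → ℝ≥0∞) :
    ∑' p : α × β, f p.1 * g p.2 = (∑' a, f a) * ∑' b, g b := by
  rw [ENNReal.tsum_prod (f := fun a b => f a * g b), ← ENNReal.tsum_mul_right]
  exact tsum_congr fun a => ENNReal.tsum_mul_left

theorem exists_strictMono_forall_cauchySeq_of_mem_isCompact {ι E : Type*} [Countable ι]
    [PseudoMetricSpace E] {K : Set E} (hK : IsCompact K) (f : ℕ → ι → E)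
    (hf : ∀ i p, f i p ∈ K) : ∃ φ : ℕ → ℕ, StrictMono φ ∧ ∀ p, CauchySeq fun i => f (φ i) p := by
  obtain ⟨_, _, φ, hφ, hlim⟩ := (isCompact_univ_pi fun _ : ι => hK).tendsto_subseq
    fun i => Set.mem_univ_pi.2 (hf i)
  exact ⟨φ, hφ, fun p => (tendsto_pi_nhds.1 hlim p).cauchySeq⟩

section SquareSummable

variable {ι E : Type*} [SeminormedAddCommGroup E]

theorem enorm_sub_sq_le (a b : E) : ‖a - b‖ₑ ^ 2 ≤ 2 * ‖a‖ₑ ^ 2 + 2 * ‖b‖ₑ ^ 2 := by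
  have h : ‖a - b‖₊ ^ 2 ≤ 2 * ‖a‖₊ ^ 2 + 2 * ‖b‖₊ ^ 2 := by
    rw [← NNReal.coe_le_coe]
    push_cast
    nlinarith [norm_sub_le a b, norm_nonneg (a - b), sq_nonneg (‖a‖ - ‖b‖)]
  simp only [enorm_eq_nnnorm]
  exact_mod_cast h

theorem tendsto_tsum_enorm_sub_sq_of_cauchySeq_of_tight {β : Type*} [Nonempty β]
    [SemilatticeSup β] (f : β → ι → E) (hf : ∀ p, CauchySeq fun i => f i p)
    (htight : ∀ δ : ℝ≥0∞, 0 < δ →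
      ∃ F : Finset ι, ∀ i, ∑' p : ↥(F : Set ι)ᶜ, ‖f i p‖ₑ ^ 2 ≤ δ) :
    Tendsto (fun n : β × β => ∑' p, ‖f n.1 p - f n.2 p‖ₑ ^ 2) atTop (𝓝 0) := by
  refine ENNReal.tendsto_nhds_zero.2 fun ε hε => ?_
  obtain ⟨F, hF⟩ := htight (ε / 2 / 4) (by simp [hε.ne'])
  have hblock : Tendsto (fun n : β × β => ∑ p ∈ F, ‖f n.1 p - f n.2 p‖ₑ ^ 2)
      atTop (𝓝 0) := by
    rw [← Finset.sum_const_zero (s := F)]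
    refine tendsto_finsetSum F fun p _ => ?_
    have hdist := ENNReal.tendsto_ofReal (cauchySeq_iff_tendsto_dist_atTop_0.1 (hf p))
    rw [ENNReal.ofReal_zero] at hdist
    simpa [Function.comp_def, dist_eq_norm, ofReal_norm] using
      ((ENNReal.continuous_pow 2).tendsto 0).comp hdist
  filter_upwards [hblock.eventually (ge_mem_nhds (ENNReal.half_pos hε.ne'))] with n hn
  rw [← ENNReal.sum_add_tsum_compl F, ← ENNReal.add_halves ε]
  refine add_le_add hn ?_
  calc ∑' p : ↥(F : Set ι)ᶜ, ‖f n.1 p - f n.2 p‖ₑ ^ 2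
      ≤ ∑' p : ↥(F : Set ι)ᶜ, (2 * ‖f n.1 p‖ₑ ^ 2 + 2 * ‖f n.2 p‖ₑ ^ 2) :=
        ENNReal.tsum_le_tsum fun p => enorm_sub_sq_le _ _
    _ ≤ 2 * (ε / 2 / 4) + 2 * (ε / 2 / 4) := by
        rw [ENNReal.tsum_add, ENNReal.tsum_mul_left, ENNReal.tsum_mul_left]
        gcongr <;> exact hF _
    _ = ε / 2 := by
        rw [← add_mul, two_add_two_eq_four, ENNReal.mul_div_cancel (by norm_num) (by norm_num)]

end SquareSummable

section PositiveOperator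

open RCLike ComplexConjugate

variable {𝕜 V ι : Type*} [RCLike 𝕜] [NormedAddCommGroup V] [InnerProductSpace 𝕜 V]

def matrixEntry (T : V →L[𝕜] V) (v : ι → V) (p : ι × ι) : 𝕜 := ⟪v p.1, T (v p.2)⟫_𝕜

theorem ContinuousLinearMap.IsPositive.norm_inner_sq_le {T : V →L[𝕜] V} (hT : T.IsPositive)
    (x y : V) : ‖⟪x, T y⟫_𝕜‖ ^ 2 ≤ re ⟪x, T x⟫_𝕜 * re ⟪y, T y⟫_𝕜 := by
  have hsymm (u v : V) : conj ⟪v, T u⟫_𝕜 = ⟪u, T v⟫_𝕜 := by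
    rw [inner_conj_symm, hT.inner_left_eq_inner_right]
  let core : PreInnerProductSpace.Core 𝕜 V :=
    { inner u v := ⟪u, T v⟫_𝕜
      conj_inner_symm := hsymm
      re_inner_nonneg := hT.re_inner_nonneg_right
      add_left u v w := inner_add_left u v (T w)
      smul_left u v r := inner_smul_left u (T v) r }
  have h := InnerProductSpace.Core.inner_mul_inner_self_le (𝕜 := 𝕜) (c := core) x y
  change ‖⟪x, T y⟫_𝕜‖ * ‖⟪y, T x⟫_𝕜‖ ≤ re ⟪x, T x⟫_𝕜 * re ⟪y, T y⟫_𝕜 at h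
  rwa [← hsymm y x, norm_conj, ← sq] at h

theorem ContinuousLinearMap.IsPositive.enorm_inner_sq_le {T : V →L[𝕜] V} (hT : T.IsPositive)
    (x y : V) :
    ‖⟪x, T y⟫_𝕜‖ₑ ^ 2 ≤ ENNReal.ofReal (re ⟪x, T x⟫_𝕜) * ENNReal.ofReal (re ⟪y, T y⟫_𝕜) := by
  rw [← ENNReal.ofReal_mul (hT.re_inner_nonneg_right x), ← ofReal_norm,
    ← ENNReal.ofReal_pow (norm_nonneg _)]
  exact ENNReal.ofReal_le_ofReal (hT.norm_inner_sq_le x y)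

theorem ContinuousLinearMap.IsPositive.tsum_compl_prod_enorm_matrixEntry_sq_le
    {T : V →L[𝕜] V} (hT : T.IsPositive) (v : ι → V) (S : Finset ι) :
    ∑' p : ↥((S ×ˢ S : Finset (ι × ι)) : Set (ι × ι))ᶜ, ‖matrixEntry T v p‖ₑ ^ 2 ≤
      2 * (∑' n : ↥(S : Set ι)ᶜ, ENNReal.ofReal (re ⟪v n, T (v n)⟫_𝕜)) *
        ∑' n, ENNReal.ofReal (re ⟪v n, T (v n)⟫_𝕜) := by
  set D : ι → ℝ≥0∞ := fun n => ENNReal.ofReal (re ⟪v n, T (v n)⟫_𝕜)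
  set Dout : ι → ℝ≥0∞ := (S : Set ι)ᶜ.indicator D
  have hpoint (p : ι × ι) :
      ((S ×ˢ S : Finset (ι × ι)) : Set (ι × ι))ᶜ.indicator (‖matrixEntry T v ·‖ₑ ^ 2) p
        ≤ Dout p.1 * D p.2 + D p.1 * Dout p.2 := by
    have hentry := hT.enorm_inner_sq_le (v p.1) (v p.2)
    by_cases h1 : p.1 ∈ S <;> by_cases h2 : p.2 ∈ S <;>
      simp [Dout, matrixEntry, h1, h2, D] at hentry ⊢
    all_goals first | exact hentry | exact le_add_right hentry
  rw [tsum_subtype _ (‖matrixEntry T v ·‖ₑ ^ 2), tsum_subtype _ D]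
  calc _ ≤ ∑' p : ι × ι, (Dout p.1 * D p.2 + D p.1 * Dout p.2) := ENNReal.tsum_le_tsum hpoint
    _ = (∑' n, Dout n) * (∑' n, D n) + (∑' n, D n) * ∑' n, Dout n := by
      rw [ENNReal.tsum_add, ENNReal.tsum_prod_mul, ENNReal.tsum_prod_mul]
    _ = 2 * (∑' n, Dout n) * ∑' n, D n := by ring

end PositiveOperator

section DensityOperator

open RCLike

variable {V : Type*} [NormedAddCommGroup V] [InnerProductSpace ℂ V] (e : HilbertBasis ℕ ℂ V)
  {ρ : V →L[ℂ] V}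

theorem IsDensityOp.tsum_ofReal_re_inner_eq_one (hρ : IsDensityOp e ρ) :
    ∑' n, ENNReal.ofReal (re ⟪e n, ρ (e n)⟫_ℂ) = 1 := by
  rw [← ENNReal.ofReal_tsum_of_nonneg (fun n => hρ.1.re_inner_nonneg_right (e n)) hρ.2.1,
    hρ.2.2, ENNReal.ofReal_one]

theorem IsDensityOp.norm_matrixEntry_le_one (hρ : IsDensityOp e ρ) (p : ℕ × ℕ) :
    ‖matrixEntry ρ e p‖ ≤ 1 := by
  have hdiag (n : ℕ) : re ⟪e n, ρ (e n)⟫_ℂ ≤ 1 :=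
    hρ.2.2 ▸ hρ.2.1.le_tsum n fun j _ => hρ.1.re_inner_nonneg_right (e j)
  have hsq : ‖matrixEntry ρ e p‖ ^ 2 ≤ 1 :=
    (hρ.1.norm_inner_sq_le (e p.1) (e p.2)).trans
      (mul_le_one₀ (hdiag p.1) (hρ.1.re_inner_nonneg_right (e p.2)) (hdiag p.2))
  exact (pow_le_one_iff_of_nonneg (norm_nonneg _) two_ne_zero).1 hsq

theorem IsDensityOp.tsum_compl_prod_enorm_matrixEntry_sq_le (hρ : IsDensityOp e ρ)
    (S : Finset ℕ) :
    ∑' p : ↥((S ×ˢ S : Finset (ℕ × ℕ)) : Set (ℕ × ℕ))ᶜ, ‖matrixEntry ρ e p‖ₑ ^ 2 ≤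
      2 * ∑' n : ↥(S : Set ℕ)ᶜ, ENNReal.ofReal (re ⟪e n, ρ (e n)⟫_ℂ) := by
  have h := hρ.1.tsum_compl_prod_enorm_matrixEntry_sq_le e S
  rwa [hρ.tsum_ofReal_re_inner_eq_one, mul_one] at h

variable {e}

theorem ofReal_mul_tsum_compl_range_le_energyTrace (En : ℕ → ℝ) (hρ : ρ.IsPositive) {N : ℕ}
    {M : ℝ} (hM : ∀ n ≥ N, M ≤ En n) :
    ENNReal.ofReal M * ∑' n : ↥(Finset.range N : Set ℕ)ᶜ, ENNReal.ofReal (re ⟪e n, ρ (e n)⟫_ℂ) ≤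
      energyTrace e En ρ := by
  rw [← ENNReal.tsum_mul_left]
  refine (ENNReal.tsum_le_tsum fun n => ?_).trans
    (ENNReal.tsum_comp_le_tsum_of_injective Subtype.val_injective _)
  have hn : N ≤ (n : ℕ) := by simpa using n.2
  rw [← ENNReal.ofReal_mul' (hρ.re_inner_nonneg_right _)]
  exact ENNReal.ofReal_le_ofReal
    (mul_le_mul_of_nonneg_right (hM n hn) (hρ.re_inner_nonneg_right _))

theorem PE_uniformly_tight (e : HilbertBasis ℕ ℂ V) {En : ℕ → ℝ}
    (hEntop : Tendsto En atTop atTop) (E : ℝ) {δ : ℝ≥0∞} (hδ : 0 < δ) :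
    ∃ N : ℕ, ∀ ρ ∈ PE e En E,
      ∑' p : ↥((Finset.range N ×ˢ Finset.range N : Finset (ℕ × ℕ)) : Set (ℕ × ℕ))ᶜ,
        ‖matrixEntry ρ e p‖ₑ ^ 2 ≤ δ := by
  have hlim : Tendsto (fun M : ℝ => ENNReal.ofReal E / ENNReal.ofReal M) atTop (𝓝 0) := by
    simpa using ENNReal.Tendsto.const_div ENNReal.tendsto_ofReal_atTop
      (Or.inr ENNReal.ofReal_ne_top)
  obtain ⟨M, hMδ, hM⟩ := ((hlim.eventually (ge_mem_nhds (ENNReal.half_pos hδ.ne'))).and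
    (eventually_gt_atTop 0)).exists
  obtain ⟨N, hN⟩ := eventually_atTop.1 (hEntop.eventually_ge_atTop M)
  refine ⟨N, fun ρ hρ => ?_⟩
  have htail : ∑' n : ↥(Finset.range N : Set ℕ)ᶜ, ENNReal.ofReal (re ⟪e n, ρ (e n)⟫_ℂ) ≤
      ENNReal.ofReal E / ENNReal.ofReal M := by
    rw [ENNReal.le_div_iff_mul_le (Or.inl (ENNReal.ofReal_pos.2 hM).ne')
      (Or.inl ENNReal.ofReal_ne_top), mul_comm]
    exact (ofReal_mul_tsum_compl_range_le_energyTrace En hρ.1.1 hN).trans hρ.2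
  calc _ ≤ 2 * ∑' n : ↥(Finset.range N : Set ℕ)ᶜ, ENNReal.ofReal (re ⟪e n, ρ (e n)⟫_ℂ) :=
        hρ.1.tsum_compl_prod_enorm_matrixEntry_sq_le e _
    _ ≤ 2 * (δ / 2) := by gcongr; exact htail.trans hMδ
    _ = δ := ENNReal.mul_div_cancel two_ne_zero ENNReal.ofNat_ne_top

theorem hsNormSq_sub (e : HilbertBasis ℕ ℂ V) (A B : V →L[ℂ] V) :
    hsNormSq e (A - B) = ∑' p, ‖matrixEntry A e p - matrixEntry B e p‖ₑ ^ 2 := by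
  simp [hsNormSq, matrixEntry, enorm_eq_nnnorm]

theorem hsCauchy_of_tendsto_hsNormSq_sub {ρ : ℕ → V →L[ℂ] V}
    (h : Tendsto (fun n : ℕ × ℕ => hsNormSq e (ρ n.1 - ρ n.2)) atTop (𝓝 0)) : HSCauchy e ρ := by
  intro ε hε
  have hpos : 0 < ENNReal.ofReal ε ^ 2 := ENNReal.pow_pos (ENNReal.ofReal_pos.2 hε) 2
  obtain ⟨N, hN⟩ := eventually_atTop_prod_self.1 (h.eventually (gt_mem_nhds hpos))
  refine ⟨N, fun i j hi hj => ?_⟩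
  rw [hsNorm, one_div, ENNReal.rpow_inv_lt_iff two_pos, ENNReal.rpow_two]
  exact hN i j hi hj

end DensityOperator

theorem PE_totally_bounded_general
    (e : HilbertBasis ℕ ℂ H) (En : ℕ → ℝ)
    (hEntop : Tendsto En atTop atTop)
    (E : ℝ)
    (ρ : ℕ → H →L[ℂ] H) (hmem : ∀ i, ρ i ∈ PE e En E) :
    ∃ φ : ℕ → ℕ, StrictMono φ ∧ HSCauchy e (ρ ∘ φ) := by
  obtain ⟨φ, hφ, hcauchy⟩ := exists_strictMono_forall_cauchySeq_of_mem_isCompact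
    (isCompact_closedBall (0 : ℂ) 1) (fun i => matrixEntry (ρ i) e)
    fun i p => mem_closedBall_zero_iff.2 ((hmem i).1.norm_matrixEntry_le_one e p)
  refine ⟨φ, hφ, hsCauchy_of_tendsto_hsNormSq_sub ?_⟩
  simp only [Function.comp_apply, hsNormSq_sub]
  refine tendsto_tsum_enorm_sub_sq_of_cauchySeq_of_tight (fun i => matrixEntry (ρ (φ i)) e)
    hcauchy fun δ hδ => ?_
  obtain ⟨N, hN⟩ := PE_uniformly_tight e hEntop E hδ
  exact ⟨Finset.range N ×ˢ Finset.range N, fun i => hN _ (hmem (φ i))⟩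

/-- `P(E)` is totally bounded in the Hilbert–Schmidt norm: every
sequence of elements of `P(E)` has a subsequence that is `‖·‖₂`-Cauchy. -/
theorem PE_totally_bounded
    (e : HilbertBasis ℕ ℂ H) (En : ℕ → ℝ)
    (hEn0 : ∀ n, 0 ≤ En n) (hEnmono : Monotone En) (hEntop : Tendsto En atTop atTop)
    (E : ℝ) (hE : 0 < E)
    (ρ : ℕ → H →L[ℂ] H) (hmem : ∀ i, ρ i ∈ PE e En E) :
    ∃ φ : ℕ → ℕ, StrictMono φ ∧ HSCauchy e (ρ ∘ φ) :=
  PE_totally_bounded_general e En hEntop E ρ hmem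
end
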